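/- arXiv:1010.4130 — 3 statements merged into one kernel-verified Lean document; each statement's English description precedes it below -/
import Mathlib

section
/- (Upper Cheeger bound) Let H be a real symmetric irreducible N×N matrix with non-positive off-diagonal entries, λ₀ < λ₁ its two smallest eigenvalues, ψ₀ = (α_i) the positive normalized ground state, and weights w_{ij} = −α_i H_{ij} α_j ≥ 0 for i ≠ j. Define for each subset S ⊂ V = {0,…,N−1} the flow F_S = Σ_{i∈S, j∉S} w_{ij} and capacity C_S = Σ_{i∈S} α_i², and the Cheeger constant Φ = min over nonempty S with C_S ≤ 1/2 of F_S/C_S. Then λ₁ − λ₀ ≤ 2Φ. -/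
open Matrix Finset
open scoped RealInnerProductSpace

section aux
variable {N : ℕ} {H : Matrix (Fin N) (Fin N) ℝ}

private lemma euclid_dot' (x y : EuclideanSpace ℝ (Fin N)) : ⟪x, y⟫ = x ⬝ᵥ y := by
  simp [PiLp.inner_apply, dotProduct, mul_comm]

private lemma expand_inner' (b : OrthonormalBasis (Fin N) ℝ (EuclideanSpace ℝ (Fin N)))
    (c d : Fin N → ℝ) :
    ⟪∑ i, c i • b i, ∑ i, d i • b i⟫ = ∑ i, c i * d i := by
  rw [sum_inner]
  simp only [inner_sum, real_inner_smul_left, real_inner_smul_right,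
    orthonormal_iff_ite.mp b.orthonormal, mul_ite, mul_one, mul_zero]
  simp [mul_comm]

private lemma mulVec_sum_smul' (H : Matrix (Fin N) (Fin N) ℝ) (c : Fin N → ℝ)
    (f : Fin N → (Fin N → ℝ)) (s : Finset (Fin N)) :
    H.mulVec (∑ i ∈ s, c i • f i) = ∑ i ∈ s, c i • H.mulVec (f i) := by
  induction s using Finset.induction with
  | empty => simp [Matrix.mulVec_zero]
  | insert _ _ h ih => simp [Finset.sum_insert h, Matrix.mulVec_add, Matrix.mulVec_smul, ih]

private lemma sum_smul_dot' (c : Fin N → ℝ) (f : Fin N → (Fin N → ℝ)) (u : Fin N → ℝ)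
    (s : Finset (Fin N)) :
    (∑ i ∈ s, c i • f i) ⬝ᵥ u = ∑ i ∈ s, c i * (f i ⬝ᵥ u) := by
  induction s using Finset.induction with
  | empty => simp
  | insert _ _ h ih => simp [Finset.sum_insert h, add_dotProduct, smul_dotProduct,
      ih, smul_eq_mul]

private lemma dot_mulVec_symm' (hsymm : H.IsSymm) (u v : Fin N → ℝ) :
    u ⬝ᵥ H.mulVec v = v ⬝ᵥ H.mulVec u := by
  rw [Matrix.dotProduct_mulVec, ← Matrix.mulVec_transpose, hsymm.eq, dotProduct_comm]

private lemma coeff_expand' (hH : H.IsHermitian) (w : Fin N → ℝ) :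
    ∃ c : Fin N → ℝ,
      ((∑ i, c i • hH.eigenvectorBasis i : EuclideanSpace ℝ (Fin N)) = w) ∧
      (w ⬝ᵥ w = ∑ i, c i ^ 2) ∧
      (w ⬝ᵥ H.mulVec w = ∑ i, hH.eigenvalues i * c i ^ 2) ∧
      (∀ u : Fin N → ℝ, w ⬝ᵥ u = ∑ i, c i * ((hH.eigenvectorBasis i : Fin N → ℝ) ⬝ᵥ u)) := by
  set b := hH.eigenvectorBasis with hb
  set μ := hH.eigenvalues with hμ
  set c : Fin N → ℝ := fun i => ⟪b i, WithLp.toLp 2 w⟫ with hc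
  have hw : (∑ i, c i • b i : EuclideanSpace ℝ (Fin N)) = w := by
    exact congrArg WithLp.ofLp (b.sum_repr' (WithLp.toLp 2 w))
  have hwfun : w = ∑ i, c i • (fun j => b i j : Fin N → ℝ) := by
    rw [← hw]
    ext j; simp
  have hHw : H.mulVec w = (∑ i, (c i * μ i) • b i : EuclideanSpace ℝ (Fin N)) := by
    rw [hwfun, mulVec_sum_smul']
    rw [WithLp.ofLp_sum]
    refine Finset.sum_congr rfl fun i _ => ?_
    rw [show (fun j => b i j : Fin N → ℝ) = (b i).ofLp from rfl, hH.mulVec_eigenvectorBasis i,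
      smul_smul]
    rfl
  refine ⟨c, hw, ?_, ?_, ?_⟩
  · have := expand_inner' b c c
    rw [euclid_dot', hw] at this
    simpa [sq] using this
  · have := expand_inner' b c (fun i => c i * μ i)
    rw [euclid_dot', hw, ← hHw] at this
    rw [this]
    exact Finset.sum_congr rfl fun i _ => by ring
  · intro u
    have hpt : ∀ k, w k = ∑ i, c i * b i k := by
      intro k; rw [hwfun]; simp [Finset.sum_apply]
    calc w ⬝ᵥ u = ∑ k, (∑ i, c i * b i k) * u k := by
          simp only [dotProduct, hpt]
      _ = ∑ k, ∑ i, c i * b i k * u k := by simp only [Finset.sum_mul]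
      _ = ∑ i, ∑ k, c i * b i k * u k := Finset.sum_comm
      _ = ∑ i, c i * ((b i : Fin N → ℝ) ⬝ᵥ u) := by
          simp [dotProduct, Finset.mul_sum, mul_assoc]

private lemma rayleigh_lower' (hH : H.IsHermitian) {lam0 : ℝ}
    (hmin : ∀ (μ : ℝ) (v : Fin N → ℝ), v ≠ 0 → H.mulVec v = μ • v → lam0 ≤ μ)
    (w : Fin N → ℝ) : lam0 * (w ⬝ᵥ w) ≤ w ⬝ᵥ H.mulVec w := by
  obtain ⟨c, -, h2, h1, -⟩ := coeff_expand' hH w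
  rw [h1, h2, Finset.mul_sum]
  refine Finset.sum_le_sum fun i _ => ?_
  have hne : (hH.eigenvectorBasis i : Fin N → ℝ) ≠ 0 := by
    have := hH.eigenvectorBasis.orthonormal.ne_zero i
    exact fun h => this (by ext j; exact congrFun h j)
  exact mul_le_mul_of_nonneg_right (hmin _ _ hne (hH.mulVec_eigenvectorBasis i)) (sq_nonneg _)

private lemma psd_zero' {lam0 : ℝ} (hsymm : H.IsSymm)
    (hpsd : ∀ w : Fin N → ℝ, lam0 * (w ⬝ᵥ w) ≤ w ⬝ᵥ H.mulVec w)
    (x : Fin N → ℝ) (hx : x ⬝ᵥ H.mulVec x = lam0 * (x ⬝ᵥ x)) :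
    H.mulVec x = lam0 • x := by
  have key : ∀ y : Fin N → ℝ, y ⬝ᵥ (H.mulVec x - lam0 • x) = 0 := by
    intro y
    set r : ℝ := y ⬝ᵥ (H.mulVec x - lam0 • x) with hr
    set a : ℝ := y ⬝ᵥ H.mulVec y - lam0 * (y ⬝ᵥ y) with ha
    have ha0 : 0 ≤ a := by have := hpsd y; linarith
    have hqf : ∀ t : ℝ, 0 ≤ a * t ^ 2 + 2 * r * t := by
      intro t
      have h := hpsd (x + t • y)
      have e1 : (x + t • y) ⬝ᵥ (x + t • y) = x ⬝ᵥ x + 2 * t * (x ⬝ᵥ y) + t ^ 2 * (y ⬝ᵥ y) := by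
        simp [add_dotProduct, dotProduct_add, smul_dotProduct,
          dotProduct_smul, dotProduct_comm y x, smul_eq_mul]
        ring
      have e2 : (x + t • y) ⬝ᵥ H.mulVec (x + t • y)
          = x ⬝ᵥ H.mulVec x + 2 * t * (y ⬝ᵥ H.mulVec x) + t ^ 2 * (y ⬝ᵥ H.mulVec y) := by
        rw [Matrix.mulVec_add, Matrix.mulVec_smul]
        simp [add_dotProduct, dotProduct_add, smul_dotProduct,
          dotProduct_smul, smul_eq_mul, dot_mulVec_symm' hsymm x y]
        ring
      have e3 : r = y ⬝ᵥ H.mulVec x - lam0 * (x ⬝ᵥ y) := by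
        rw [hr, dotProduct_sub, dotProduct_smul, smul_eq_mul,
          dotProduct_comm y x]
      rw [e1, e2] at h
      rw [e3, ha]
      nlinarith [hx]
    by_contra hr0
    have h1 := hqf (-r / (a + 1))
    have hapos : (0:ℝ) < a + 1 := by linarith
    have : a * (-r / (a+1))^2 + 2 * r * (-r/(a+1)) = (-(r^2) * (a + 2))/(a+1)^2 := by
      field_simp; ring
    rw [this] at h1
    have hs : (0:ℝ) < (a+1)^2 := by positivity
    have h2 : (0:ℝ) ≤ -(r^2) * (a+2) := by
      have h3 := mul_le_mul_of_nonneg_right h1 hs.le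
      rw [zero_mul, div_mul_cancel₀ _ (ne_of_gt hs)] at h3
      exact h3
    have h4 : (0:ℝ) < r^2 * (a+2) := mul_pos (sq_pos_of_ne_zero hr0) (by linarith)
    linarith
  ext j
  have := key (Pi.single j 1)
  rw [single_dotProduct] at this
  simpa using sub_eq_zero.mp (by simpa using this)

private lemma ground_unique' (hsymm : H.IsSymm)
    (hoffdiag : ∀ i j, i ≠ j → H i j ≤ 0)
    (hirr : ∀ S : Finset (Fin N), S.Nonempty → S ≠ Finset.univ →
      ∃ i ∈ S, ∃ j ∉ S, H i j ≠ 0)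
    {lam0 : ℝ}
    (α : Fin N → ℝ) (hpos : ∀ i, 0 < α i)
    (hR : ∀ w : Fin N → ℝ, lam0 * (w ⬝ᵥ w) ≤ w ⬝ᵥ H.mulVec w)
    (hpsd_zero : ∀ x : Fin N → ℝ, x ⬝ᵥ H.mulVec x = lam0 * (x ⬝ᵥ x) → H.mulVec x = lam0 • x) :
    ∀ u : Fin N → ℝ, H.mulVec u = lam0 • u → u ⬝ᵥ α = 0 → u = 0 := by
  intro u heig hperp
  by_contra hu
  set b : Fin N → ℝ := fun i => |u i| with hbdef
  have hdouble : ∀ x : Fin N → ℝ, x ⬝ᵥ H.mulVec x = ∑ i, ∑ j, x i * (H i j * x j) := by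
    intro x; simp [dotProduct, Matrix.mulVec, Finset.mul_sum]
  have hterm : ∀ i j, b i * (H i j * b j) ≤ u i * (H i j * u j) := by
    intro i j
    rcases eq_or_ne i j with rfl | hij
    · refine le_of_eq ?_
      simp only [hbdef]
      rw [show |u i| * (H i i * |u i|) = H i i * (|u i| * |u i|) from by ring,
        abs_mul_abs_self]
      ring
    · have h1 : H i j ≤ 0 := hoffdiag i j hij
      have h2 : u i * u j ≤ b i * b j := by
        simp only [hbdef, ← abs_mul]; exact le_abs_self _
      nlinarith
  have hq1 : b ⬝ᵥ H.mulVec b ≤ u ⬝ᵥ H.mulVec u := by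
    rw [hdouble, hdouble]
    exact Finset.sum_le_sum fun i _ => Finset.sum_le_sum fun j _ => hterm i j
  have hbb : b ⬝ᵥ b = u ⬝ᵥ u := by
    simp [dotProduct, hbdef, abs_mul_abs_self]
  have huu : u ⬝ᵥ H.mulVec u = lam0 * (u ⬝ᵥ u) := by
    rw [heig, dotProduct_smul, smul_eq_mul]
  have hbeq : b ⬝ᵥ H.mulVec b = lam0 * (b ⬝ᵥ b) := by
    have := hR b; rw [hbb] at *; linarith
  have heigb : H.mulVec b = lam0 • b := hpsd_zero b hbeq
  obtain ⟨i0, hi0⟩ : ∃ i, u i ≠ 0 := Function.ne_iff.mp hu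
  have hbne0 : b i0 ≠ 0 := by simp [hbdef, hi0]
  set S0 : Finset (Fin N) := Finset.univ.filter (fun i => b i ≠ 0) with hS0
  have hS0ne : S0.Nonempty := ⟨i0, by simp [hS0, hbne0]⟩
  have hS0univ : S0 = Finset.univ := by
    by_contra hne
    obtain ⟨i, hiS, j, hjS, hHij⟩ := hirr S0 hS0ne hne
    have hbj : b j = 0 := by
      by_contra h; exact hjS (by simp [hS0, h])
    have hsum : ∑ k, H j k * b k = 0 := by
      have h := congrFun heigb j
      simpa [Matrix.mulVec, dotProduct, hbj] using h
    have hnonpos : ∀ k ∈ univ, H j k * b k ≤ 0 := by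
      intro k _
      rcases eq_or_ne (b k) 0 with h | h
      · simp [h]
      · have hkj : k ≠ j := fun e => h (e ▸ hbj)
        have hbk : 0 < b k := lt_of_le_of_ne (abs_nonneg _) (Ne.symm h)
        exact mul_nonpos_of_nonpos_of_nonneg (hoffdiag j k hkj.symm) hbk.le
    have hterm0 := (Finset.sum_eq_zero_iff_of_nonpos hnonpos).mp hsum
    have hbi : b i ≠ 0 := by simpa [hS0] using hiS
    have hji : H j i = 0 := by
      rcases mul_eq_zero.mp (hterm0 i (mem_univ i)) with h | h
      · exact h
      · exact absurd h hbi
    rw [hsymm.apply i j] at hji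
    exact hHij hji
  have hune : ∀ k, u k ≠ 0 := by
    intro k
    have hk : b k ≠ 0 := by
      have : k ∈ S0 := hS0univ ▸ mem_univ k
      simpa [hS0] using this
    exact fun h => hk (by simp [hbdef, h])
  have hq2 : ∑ p ∈ (univ ×ˢ univ : Finset (Fin N × Fin N)),
      (u p.1 * (H p.1 p.2 * u p.2) - b p.1 * (H p.1 p.2 * b p.2)) = 0 := by
    rw [Finset.sum_sub_distrib]
    rw [Finset.sum_product, Finset.sum_product]
    rw [← hdouble, ← hdouble, huu, hbeq, hbb]
    ring
  have hterm_eq : ∀ i j, u i * (H i j * u j) = b i * (H i j * b j) := by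
    intro i j
    have h := (Finset.sum_eq_zero_iff_of_nonneg (fun p _ => by
      have := hterm p.1 p.2; linarith)).mp hq2 (i, j) (by simp)
    simpa [sub_eq_zero] using h
  set Sp : Finset (Fin N) := univ.filter (fun i => 0 < u i) with hSp
  have hcontra : Sp.Nonempty → Sp ≠ univ → False := by
    intro hne hneq
    obtain ⟨i, hiS, j, hjS, hHij⟩ := hirr Sp hne hneq
    have hui : 0 < u i := by simpa [hSp] using hiS
    have huj : u j < 0 := by
      have h1 : ¬ 0 < u j := by simpa [hSp] using hjS
      exact lt_of_le_of_ne (not_lt.mp h1) (hune j)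
    have h := hterm_eq i j
    have hb2 : b i * b j > 0 := mul_pos (abs_pos.mpr (hune i)) (abs_pos.mpr (hune j))
    have hu2 : u i * u j < 0 := mul_neg_of_pos_of_neg hui huj
    have : H i j * (u i * u j) = H i j * (b i * b j) := by ring_nf; ring_nf at h; linarith
    have := mul_left_cancel₀ hHij this
    nlinarith
  rcases eq_or_ne Sp univ with hSpu | hSpu
  · have : 0 < u ⬝ᵥ α := by
      refine Finset.sum_pos (fun k _ => ?_) ⟨i0, mem_univ i0⟩
      have : 0 < u k := by
        have : k ∈ Sp := hSpu ▸ mem_univ k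
        simpa [hSp] using this
      exact mul_pos this (hpos k)
    rw [hperp] at this; exact lt_irrefl 0 this
  · rcases Sp.eq_empty_or_nonempty with hSpe | hSpne
    · have : u ⬝ᵥ α < 0 := by
        apply Finset.sum_neg (fun k _ => ?_) ⟨i0, mem_univ i0⟩
        have hk : ¬ 0 < u k := by
          intro h
          have : k ∈ Sp := by simp [hSp, h]
          simp [hSpe] at this
        exact mul_neg_of_neg_of_pos (lt_of_le_of_ne (not_lt.mp hk) (hune k)) (hpos k)
      rw [hperp] at this; exact lt_irrefl 0 this
    · exact hcontra hSpne hSpu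

private lemma rayleigh_gap' (hH : H.IsHermitian) (hsymm : H.IsSymm) {lam0 lam1 : ℝ}
    (hsecond : ∀ (μ : ℝ) (v : Fin N → ℝ), v ≠ 0 → H.mulVec v = μ • v →
      μ = lam0 ∨ lam1 ≤ μ)
    (α : Fin N → ℝ) (heig0 : H.mulVec α = lam0 • α)
    (hground : ∀ u : Fin N → ℝ, H.mulVec u = lam0 • u → u ⬝ᵥ α = 0 → u = 0)
    (v : Fin N → ℝ) (hperp : v ⬝ᵥ α = 0) :
    lam1 * (v ⬝ᵥ v) ≤ v ⬝ᵥ H.mulVec v := by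
  obtain ⟨c, hw, h2, h1, h3⟩ := coeff_expand' hH v
  set b := hH.eigenvectorBasis with hb
  set μ := hH.eigenvalues with hμ
  set Bf : Fin N → Fin N → ℝ := fun i j => b i j with hBf
  have heigB : ∀ i, H.mulVec (Bf i) = μ i • (Bf i) := fun i => hH.mulVec_eigenvectorBasis i
  have hbne : ∀ i, Bf i ≠ 0 := by
    intro i
    have h := b.orthonormal.ne_zero i
    exact fun hzero => h (by ext j; exact congrFun hzero j)
  have horth : ∀ i, μ i ≠ lam0 → Bf i ⬝ᵥ α = 0 := by
    intro i hne
    have h4 : Bf i ⬝ᵥ H.mulVec α = α ⬝ᵥ H.mulVec (Bf i) := dot_mulVec_symm' hsymm _ _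
    rw [heig0, heigB i] at h4
    rw [dotProduct_smul, dotProduct_smul, smul_eq_mul, smul_eq_mul,
      dotProduct_comm α] at h4
    rcases mul_eq_mul_right_iff.mp h4 with h | h
    · exact absurd h.symm hne
    · exact h
  set T : Finset (Fin N) := univ.filter (fun i => μ i = lam0) with hT
  set P : Fin N → ℝ := ∑ i ∈ T, c i • Bf i with hP
  have hPeig : H.mulVec P = lam0 • P := by
    rw [hP, mulVec_sum_smul', Finset.smul_sum]
    refine Finset.sum_congr rfl fun i hi => ?_
    have he : μ i = lam0 := by simpa [hT] using hi
    rw [heigB i, he, smul_comm]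
  have hPperp : P ⬝ᵥ α = 0 := by
    rw [hP, sum_smul_dot']
    rw [Finset.sum_subset (subset_univ T) (fun i _ hiT => by
      rw [horth i (by simpa [hT] using hiT), mul_zero])]
    rw [← h3 α, hperp]
  have hP0 : P = 0 := hground P hPeig hPperp
  have hc0 : ∀ i, μ i = lam0 → c i = 0 := by
    intro i hi
    have hdot := congrArg (fun z : Fin N → ℝ => z ⬝ᵥ Bf i) hP0
    simp only [hP, sum_smul_dot', zero_dotProduct] at hdot
    have hd : ∀ j, Bf j ⬝ᵥ Bf i = if j = i then 1 else 0 := by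
      intro j
      have horm := orthonormal_iff_ite.mp b.orthonormal j i
      rw [show (inner ℝ (b j) (b i) : ℝ) = ∑ k, b j k * b i k from by
        simp [PiLp.inner_apply, mul_comm]] at horm
      rw [show Bf j ⬝ᵥ Bf i = ∑ k, b j k * b i k from rfl, horm]
    simp only [hd, mul_ite, mul_one, mul_zero] at hdot
    rw [Finset.sum_ite_eq' T i] at hdot
    simpa [hT, hi] using hdot
  rw [h1, h2, Finset.mul_sum]
  refine Finset.sum_le_sum fun i _ => ?_
  rcases eq_or_ne (μ i) lam0 with he | hne
  · rw [hc0 i he]; simp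
  · rcases hsecond (μ i) (Bf i) (hbne i) (heigB i) with h | h
    · exact absurd h hne
    · exact mul_le_mul_of_nonneg_right h (sq_nonneg _)

private lemma transform' (hsymm : H.IsSymm) {lam0 : ℝ} (α : Fin N → ℝ)
    (heig0 : H.mulVec α = lam0 • α) (g : Fin N → ℝ) :
    (fun i => g i * α i) ⬝ᵥ H.mulVec (fun i => g i * α i)
      - lam0 * ((fun i => g i * α i) ⬝ᵥ (fun i => g i * α i))
    = ∑ i, ∑ j, -(α i * H i j * α j) * (g i - g j) ^ 2 / 2 := by
  set v : Fin N → ℝ := fun i => g i * α i with hv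
  have hαπ : ∀ i, ∑ j, H i j * α j = lam0 * α i := by
    intro i
    have := congrFun heig0 i
    simpa [Matrix.mulVec, dotProduct] using this
  have hdouble : v ⬝ᵥ H.mulVec v = ∑ i, ∑ j, v i * (H i j * v j) := by
    simp [dotProduct, Matrix.mulVec, Finset.mul_sum]
  have hvv : lam0 * (v ⬝ᵥ v) = ∑ i, ∑ j, H i j * α j * (g i ^ 2 * α i) := by
    rw [dotProduct, Finset.mul_sum]
    refine Finset.sum_congr rfl fun i _ => ?_
    rw [← Finset.sum_mul]
    rw [hαπ i, hv]
    ring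
  have hanti : ∑ i, ∑ j, α i * H i j * α j * (g j ^ 2 - g i ^ 2) / 2 = 0 := by
    have hsw : ∑ i, ∑ j, α i * H i j * α j * (g j ^ 2 - g i ^ 2) / 2
        = ∑ j, ∑ i, α i * H i j * α j * (g j ^ 2 - g i ^ 2) / 2 := Finset.sum_comm
    have hneg : ∑ j, ∑ i, α i * H i j * α j * (g j ^ 2 - g i ^ 2) / 2
        = -∑ i, ∑ j, α i * H i j * α j * (g j ^ 2 - g i ^ 2) / 2 := by
      rw [← Finset.sum_neg_distrib]
      refine Finset.sum_congr rfl fun i _ => ?_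
      rw [← Finset.sum_neg_distrib]
      refine Finset.sum_congr rfl fun j _ => ?_
      rw [hsymm.apply i j]
      ring
    linarith [hsw, hneg]
  have key : ∀ i j : Fin N,
      v i * (H i j * v j) - H i j * α j * (g i ^ 2 * α i)
        - -(α i * H i j * α j) * (g i - g j) ^ 2 / 2
      = α i * H i j * α j * (g j ^ 2 - g i ^ 2) / 2 := by
    intro i j; rw [hv]; ring
  have hD : ∑ i, ∑ j, (v i * (H i j * v j) - H i j * α j * (g i ^ 2 * α i)
      - -(α i * H i j * α j) * (g i - g j) ^ 2 / 2) = 0 := by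
    calc ∑ i, ∑ j, (v i * (H i j * v j) - H i j * α j * (g i ^ 2 * α i)
          - -(α i * H i j * α j) * (g i - g j) ^ 2 / 2)
        = ∑ i, ∑ j, α i * H i j * α j * (g j ^ 2 - g i ^ 2) / 2 :=
          Finset.sum_congr rfl fun i _ => Finset.sum_congr rfl fun j _ => key i j
      _ = 0 := hanti
  rw [hdouble, hvv]
  have hexp : ∑ i, ∑ j, (v i * (H i j * v j) - H i j * α j * (g i ^ 2 * α i)
      - -(α i * H i j * α j) * (g i - g j) ^ 2 / 2)
      = (∑ i, ∑ j, v i * (H i j * v j)) - (∑ i, ∑ j, H i j * α j * (g i ^ 2 * α i))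
        - ∑ i, ∑ j, -(α i * H i j * α j) * (g i - g j) ^ 2 / 2 := by
    simp [Finset.sum_sub_distrib]
  rw [hexp] at hD
  linarith [hD]

end aux

/-- Upper Cheeger bound: λ₁ − λ₀ ≤ 2Φ, where Φ is the Cheeger constant of the
weighted graph with weights w_{ij} = −α_i H_{ij} α_j and capacities C_S = Σ_{i∈S} α_i². -/
theorem stmt_5 {N : ℕ} (H : Matrix (Fin N) (Fin N) ℝ)
    (hsymm : H.IsSymm)
    (hoffdiag : ∀ i j, i ≠ j → H i j ≤ 0)
    (hirr : ∀ S : Finset (Fin N), S.Nonempty → S ≠ Finset.univ →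
      ∃ i ∈ S, ∃ j ∉ S, H i j ≠ 0)
    (lam0 lam1 : ℝ) (hlt : lam0 < lam1)
    (α : Fin N → ℝ) (hpos : ∀ i, 0 < α i) (hnorm : ∑ i, (α i) ^ 2 = 1)
    (heig0 : H.mulVec α = lam0 • α)
    (hmin : ∀ (μ : ℝ) (v : Fin N → ℝ), v ≠ 0 → H.mulVec v = μ • v → lam0 ≤ μ)
    (hval1 : ∃ v : Fin N → ℝ, v ≠ 0 ∧ H.mulVec v = lam1 • v)
    (hsecond : ∀ (μ : ℝ) (v : Fin N → ℝ), v ≠ 0 → H.mulVec v = μ • v →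
      μ = lam0 ∨ lam1 ≤ μ)
    (Φ : ℝ)
    (hΦ : Φ = sInf {x : ℝ | ∃ S : Finset (Fin N), S.Nonempty ∧
      (∑ i ∈ S, (α i) ^ 2) ≤ 1 / 2 ∧
      x = (∑ i ∈ S, ∑ j ∈ Sᶜ, -(α i * H i j * α j)) / ∑ i ∈ S, (α i) ^ 2}) :
    lam1 - lam0 ≤ 2 * Φ := by
  have hH : H.IsHermitian := by
    rwa [Matrix.IsHermitian, conjTranspose_eq_transpose_of_trivial]
  have hR := rayleigh_lower' hH hmin
  have hpz : ∀ x : Fin N → ℝ, x ⬝ᵥ H.mulVec x = lam0 * (x ⬝ᵥ x) → H.mulVec x = lam0 • x :=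
    fun x hx => psd_zero' hsymm hR x hx
  have hground := ground_unique' hsymm hoffdiag hirr α hpos hR hpz
  have hgap := rayleigh_gap' hH hsymm hsecond α heig0 hground
  -- nonemptiness of the Cheeger set
  obtain ⟨v1, hv1ne, hv1eig⟩ := hval1
  have hv1perp : v1 ⬝ᵥ α = 0 := by
    have h4 : v1 ⬝ᵥ H.mulVec α = α ⬝ᵥ H.mulVec v1 := dot_mulVec_symm' hsymm _ _
    rw [heig0, hv1eig, dotProduct_smul, dotProduct_smul, smul_eq_mul,
      smul_eq_mul, dotProduct_comm α v1] at h4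
    rcases mul_eq_mul_right_iff.mp h4 with h | h
    · exact absurd h hlt.ne
    · exact h
  obtain ⟨i0, hi0⟩ := Function.ne_iff.mp hv1ne
  have hsmall : ∃ i, α i ^ 2 ≤ 1/2 := by
    by_contra hbig
    push_neg at hbig
    by_cases hone : ∀ j : Fin N, j = i0
    · have huniv : (univ : Finset (Fin N)) = {i0} := by
        ext j; simp [hone j]
      rw [dotProduct, huniv, Finset.sum_singleton] at hv1perp
      have : v1 i0 = 0 := by
        rcases mul_eq_zero.mp hv1perp with h | h
        · exact h
        · exact absurd h (ne_of_gt (hpos i0))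
      exact hv1ne (funext fun j => (hone j) ▸ this)
    · push_neg at hone
      obtain ⟨j, hj⟩ := hone
      have hpair : ∑ i ∈ ({i0, j} : Finset (Fin N)), α i ^ 2 ≤ 1 := by
        rw [← hnorm]
        exact Finset.sum_le_sum_of_subset_of_nonneg (subset_univ _) (fun i _ _ => sq_nonneg _)
      rw [Finset.sum_pair (Ne.symm hj)] at hpair
      have h1 := hbig i0
      have h2 := hbig j
      linarith
  obtain ⟨iS, hiS⟩ := hsmall
  have hsne : Set.Nonempty {x : ℝ | ∃ S : Finset (Fin N), S.Nonempty ∧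
      (∑ i ∈ S, (α i) ^ 2) ≤ 1 / 2 ∧
      x = (∑ i ∈ S, ∑ j ∈ Sᶜ, -(α i * H i j * α j)) / ∑ i ∈ S, (α i) ^ 2} :=
    ⟨_, ⟨{iS}, ⟨iS, mem_singleton_self iS⟩, by simpa using hiS, rfl⟩⟩
  -- the main bound for every admissible S
  have hlb : ∀ x ∈ {x : ℝ | ∃ S : Finset (Fin N), S.Nonempty ∧
      (∑ i ∈ S, (α i) ^ 2) ≤ 1 / 2 ∧
      x = (∑ i ∈ S, ∑ j ∈ Sᶜ, -(α i * H i j * α j)) / ∑ i ∈ S, (α i) ^ 2},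
      (lam1 - lam0) / 2 ≤ x := by
    rintro x ⟨S, hSne, hChalf, hxeq⟩
    set C : ℝ := ∑ i ∈ S, (α i) ^ 2 with hCdef
    set Cc : ℝ := ∑ i ∈ Sᶜ, (α i) ^ 2 with hCcdef
    set F : ℝ := ∑ i ∈ S, ∑ j ∈ Sᶜ, -(α i * H i j * α j) with hFdef
    have hCsum : C + Cc = 1 := by
      rw [hCdef, hCcdef, Finset.sum_add_sum_compl S (fun i => (α i) ^ 2), hnorm]
    have hCpos : 0 < C := Finset.sum_pos (fun i _ => pow_pos (hpos i) 2) hSne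
    have hCchalf : 1/2 ≤ Cc := by linarith
    have hCcpos : 0 < Cc := by linarith
    set d : ℝ := 1/C + 1/Cc with hddef
    have hdpos : 0 < d := by rw [hddef]; positivity
    set g : Fin N → ℝ := fun i => if i ∈ S then 1/C else -(1/Cc) with hg
    set v : Fin N → ℝ := fun i => g i * α i with hvdef
    have hgS : ∀ i ∈ S, g i = 1/C := fun i hi => by simp [hg, hi]
    have hgSc : ∀ i ∈ Sᶜ, g i = -(1/Cc) := fun i hi => by
      simp [hg, Finset.mem_compl.mp hi]
    have hvα : v ⬝ᵥ α = 0 := by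
      rw [dotProduct, ← Finset.sum_add_sum_compl S (fun i => v i * α i)]
      have e1 : ∑ i ∈ S, v i * α i = (1/C) * C := by
        rw [hCdef, Finset.mul_sum]
        refine Finset.sum_congr rfl fun i hi => ?_
        rw [hvdef]
        simp only [hgS i hi]
        ring
      have e2 : ∑ i ∈ Sᶜ, v i * α i = -(1/Cc) * Cc := by
        rw [hCcdef, Finset.mul_sum]
        refine Finset.sum_congr rfl fun i hi => ?_
        rw [hvdef]
        simp only [hgSc i hi]
        ring
      rw [e1, e2]
      field_simp
      norm_num
    have hvv : v ⬝ᵥ v = d := by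
      rw [dotProduct, ← Finset.sum_add_sum_compl S (fun i => v i * v i)]
      have e1 : ∑ i ∈ S, v i * v i = (1/C)^2 * C := by
        rw [hCdef, Finset.mul_sum]
        refine Finset.sum_congr rfl fun i hi => ?_
        rw [hvdef]
        simp only [hgS i hi]
        ring
      have e2 : ∑ i ∈ Sᶜ, v i * v i = (1/Cc)^2 * Cc := by
        rw [hCcdef, Finset.mul_sum]
        refine Finset.sum_congr rfl fun i hi => ?_
        rw [hvdef]
        simp only [hgSc i hi]
        ring
      rw [e1, e2, hddef]
      field_simp
    have hblock : ∑ i, ∑ j, -(α i * H i j * α j) * (g i - g j) ^ 2 / 2 = d^2 * F := by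
      rw [← Finset.sum_add_sum_compl S
        (fun i => ∑ j, -(α i * H i j * α j) * (g i - g j) ^ 2 / 2)]
      have e1 : ∑ i ∈ S, ∑ j, -(α i * H i j * α j) * (g i - g j) ^ 2 / 2
          = ∑ i ∈ S, ∑ j ∈ Sᶜ, -(α i * H i j * α j) * d ^ 2 / 2 := by
        refine Finset.sum_congr rfl fun i hi => ?_
        rw [← Finset.sum_add_sum_compl S
          (fun j => -(α i * H i j * α j) * (g i - g j) ^ 2 / 2)]
        have z : ∑ j ∈ S, -(α i * H i j * α j) * (g i - g j) ^ 2 / 2 = 0 :=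
          Finset.sum_eq_zero fun j hj => by rw [hgS i hi, hgS j hj]; ring
        rw [z, zero_add]
        refine Finset.sum_congr rfl fun j hj => ?_
        rw [hgS i hi, hgSc j hj, hddef]
        ring
      have e2 : ∑ i ∈ Sᶜ, ∑ j, -(α i * H i j * α j) * (g i - g j) ^ 2 / 2
          = ∑ i ∈ Sᶜ, ∑ j ∈ S, -(α i * H i j * α j) * d ^ 2 / 2 := by
        refine Finset.sum_congr rfl fun i hi => ?_
        rw [← Finset.sum_add_sum_compl S
          (fun j => -(α i * H i j * α j) * (g i - g j) ^ 2 / 2)]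
        have z : ∑ j ∈ Sᶜ, -(α i * H i j * α j) * (g i - g j) ^ 2 / 2 = 0 :=
          Finset.sum_eq_zero fun j hj => by rw [hgSc i hi, hgSc j hj]; ring
        rw [z, add_zero]
        refine Finset.sum_congr rfl fun j hj => ?_
        rw [hgSc i hi, hgS j hj, hddef]
        ring
      have e3 : ∑ i ∈ Sᶜ, ∑ j ∈ S, -(α i * H i j * α j) * d ^ 2 / 2
          = ∑ i ∈ S, ∑ j ∈ Sᶜ, -(α i * H i j * α j) * d ^ 2 / 2 := by
        rw [Finset.sum_comm]
        refine Finset.sum_congr rfl fun i hi => Finset.sum_congr rfl fun j hj => ?_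
        rw [hsymm.apply i j]
        ring
      have e4 : ∑ i ∈ S, ∑ j ∈ Sᶜ, -(α i * H i j * α j) * d ^ 2 / 2 = d^2/2 * F := by
        rw [hFdef, Finset.mul_sum]
        refine Finset.sum_congr rfl fun i hi => ?_
        rw [Finset.mul_sum]
        exact Finset.sum_congr rfl fun j hj => by ring
      rw [e1, e2, e3, e4]
      ring
    have hF : 0 ≤ F := by
      rw [hFdef]
      refine Finset.sum_nonneg fun i hi => Finset.sum_nonneg fun j hj => ?_
      have hij : i ≠ j := fun e => (Finset.mem_compl.mp hj) (e ▸ hi)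
      have hH0 := hoffdiag i j hij
      have h8 : 0 ≤ (α i * α j) * (-H i j) :=
        mul_nonneg (mul_pos (hpos i) (hpos j)).le (neg_nonneg.mpr hH0)
      nlinarith [h8]
    have hvne : v ≠ 0 := by
      obtain ⟨i, hi⟩ := hSne
      intro h
      have hz := congrFun h i
      have hcomp : v i = 1/C * α i := by rw [hvdef]; simp only [hgS i hi]
      have hgt : 0 < v i := by
        rw [hcomp]; exact mul_pos (one_div_pos.mpr hCpos) (hpos i)
      rw [hz] at hgt
      exact lt_irrefl 0 hgt
    have hgapv := hgap v hvα
    have htr := transform' hsymm α heig0 g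
    rw [← hvdef] at htr
    rw [hblock] at htr
    rw [hvv] at hgapv htr
    have hkey : lam1 - lam0 ≤ d * F := by
      have h5 : (lam1 - lam0) * d ≤ (d * F) * d := by
        have he : d^2 * F = (d * F) * d := by ring
        rw [he] at htr
        linarith
      exact le_of_mul_le_mul_right h5 hdpos
    have h6 : 1/Cc ≤ 1/C := one_div_le_one_div_of_le hCpos (by linarith)
    have h7 : d ≤ 2 * (1/C) := by rw [hddef]; linarith
    have hdF : d * F ≤ 2 * (F / C) := by
      calc d * F ≤ (2 * (1/C)) * F := mul_le_mul_of_nonneg_right h7 hF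
        _ = 2 * (F / C) := by ring
    rw [hxeq]
    have hfin : lam1 - lam0 ≤ 2 * (F / C) := hkey.trans hdF
    linarith [hfin]
  have hΦlb : (lam1 - lam0) / 2 ≤ Φ := by
    rw [hΦ]
    exact le_csInf hsne hlb
  linarith
end

section
/- (Rayleigh-quotient identity for the gap) With e = Dψ₁ and ê_i = e_i/π_i for i ∈ V⁺ and ê_i = 0 otherwise, one has λ₁ − λ₀ ≥ (Σ_{i<j} w_{ij}(ê_i − ê_j)²) / (Σ_{i∈V⁺} π_i ê_i²). -/
open Matrix Finset

lemma key_ineq (x y : ℝ) : (max x 0 - max y 0) ^ 2 ≤ (max x 0 - max y 0) * (x - y) := by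
  rcases le_total x y with h | h
  · have h1 : max x 0 ≤ max y 0 := max_le_max h le_rfl
    have h2 : min x 0 ≤ min y 0 := min_le_min h le_rfl
    have hx : max x 0 + min x 0 = x + 0 := max_add_min x 0
    have hy : max y 0 + min y 0 = y + 0 := max_add_min y 0
    nlinarith [mul_nonneg (sub_nonneg.2 h1) (sub_nonneg.2 h2)]
  · have h1 : max y 0 ≤ max x 0 := max_le_max h le_rfl
    have h2 : min y 0 ≤ min x 0 := min_le_min h le_rfl
    have hx : max x 0 + min x 0 = x + 0 := max_add_min x 0
    have hy : max y 0 + min y 0 = y + 0 := max_add_min y 0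
    nlinarith [mul_nonneg (sub_nonneg.2 h1) (sub_nonneg.2 h2)]

/-- Rayleigh-quotient bound for the gap: with e = Dψ₁ and ê_i = e_i/π_i on V⁺,
zero elsewhere, λ₁ − λ₀ ≥ (Σ_{i<j} w_{ij}(ê_i − ê_j)²) / (Σ_{i∈V⁺} π_i ê_i²). -/
theorem stmt_8 {N : ℕ} (H : Matrix (Fin N) (Fin N) ℝ)
    (hsymm : H.IsSymm)
    (hoffdiag : ∀ i j, i ≠ j → H i j ≤ 0)
    (hirr : ∀ S : Finset (Fin N), S.Nonempty → S ≠ Finset.univ →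
      ∃ i ∈ S, ∃ j ∉ S, H i j ≠ 0)
    (lam0 lam1 : ℝ) (hlt : lam0 < lam1)
    (α : Fin N → ℝ) (hpos : ∀ i, 0 < α i) (hnorm : ∑ i, (α i) ^ 2 = 1)
    (heig0 : H.mulVec α = lam0 • α)
    (ψ₁ : Fin N → ℝ) (hψ₁ : ψ₁ ≠ 0) (heig1 : H.mulVec ψ₁ = lam1 • ψ₁)
    (hVplus : ∃ i, 0 < α i * ψ₁ i)
    (ehat : Fin N → ℝ)
    (hehat : ehat = fun i => if 0 < α i * ψ₁ i then (α i * ψ₁ i) / (α i) ^ 2 else 0) :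
    (∑ i, ∑ j ∈ Finset.univ.filter (fun j => i < j),
        -(α i * H i j * α j) * (ehat i - ehat j) ^ 2) /
      (∑ i ∈ Finset.univ.filter (fun i => 0 < α i * ψ₁ i),
        (α i) ^ 2 * (ehat i) ^ 2) ≤ lam1 - lam0 := by
  have hα : ∀ i, α i ≠ 0 := fun i => (hpos i).ne'
  set f : Fin N → ℝ := fun i => ψ₁ i / α i with hf
  -- ehat is the positive part of f
  have hfdef : ∀ i, f i = ψ₁ i / α i := fun i => rfl
  have hehat' : ∀ i, ehat i = max (f i) 0 := by
    intro i
    simp only [hehat, hfdef]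
    by_cases h : 0 < α i * ψ₁ i
    · rw [if_pos h]
      have hψ : 0 < ψ₁ i := by nlinarith [hpos i]
      rw [max_eq_left (le_of_lt (div_pos hψ (hpos i))), pow_two,
        mul_div_mul_left _ _ (hα i)]
    · rw [if_neg h]
      have hψ : ψ₁ i ≤ 0 := by nlinarith [hpos i]
      exact (max_eq_right (div_nonpos_of_nonpos_of_nonneg hψ (hpos i).le)).symm
  have hαf : ∀ j, α j * f j = ψ₁ j := by
    intro j
    rw [hfdef, mul_div_cancel₀ _ (hα j)]
  -- row identity
  have hrow : ∀ i, ∑ j, -(α i * H i j * α j) * (f i - f j)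
      = (lam1 - lam0) * (α i * ψ₁ i) := by
    intro i
    have h1 : ∑ j, H i j * ψ₁ j = lam1 * ψ₁ i := by
      have := congrFun heig1 i
      simpa [Matrix.mulVec, dotProduct] using this
    have h0 : ∑ j, H i j * α j = lam0 * α i := by
      have := congrFun heig0 i
      simpa [Matrix.mulVec, dotProduct] using this
    have hsplit : ∀ j, -(α i * H i j * α j) * (f i - f j)
        = (-(α i * f i)) * (H i j * α j) + α i * (H i j * ψ₁ j) := by
      intro j
      rw [← hαf j]
      ring
    calc ∑ j, -(α i * H i j * α j) * (f i - f j)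
        = ∑ j, ((-(α i * f i)) * (H i j * α j) + α i * (H i j * ψ₁ j)) := by
          exact Finset.sum_congr rfl fun j _ => hsplit j
      _ = (-(α i * f i)) * (∑ j, H i j * α j) + α i * (∑ j, H i j * ψ₁ j) := by
          rw [Finset.sum_add_distrib, Finset.mul_sum, Finset.mul_sum]
      _ = (-(α i * f i)) * (lam0 * α i) + α i * (lam1 * ψ₁ i) := by rw [h0, h1]
      _ = (lam1 - lam0) * (α i * ψ₁ i) := by rw [hαf i]; ring
  -- the denominator
  set D : ℝ := ∑ i ∈ Finset.univ.filter (fun i => 0 < α i * ψ₁ i),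
      (α i) ^ 2 * (ehat i) ^ 2 with hD
  have hDeq : D = ∑ i, ehat i * (α i * ψ₁ i) := by
    rw [hD, Finset.sum_filter]
    refine Finset.sum_congr rfl fun i _ => ?_
    by_cases h : 0 < α i * ψ₁ i
    · rw [if_pos h]
      have : ehat i = (α i * ψ₁ i) / (α i) ^ 2 := by rw [hehat]; simp [h]
      rw [this]
      have h2 : (α i : ℝ) ^ 2 ≠ 0 := pow_ne_zero _ (hα i)
      field_simp
    · rw [if_neg h]
      have : ehat i = 0 := by rw [hehat]; simp [h]
      rw [this, zero_mul]
  have hDpos : 0 < D := by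
    obtain ⟨i₀, hi₀⟩ := hVplus
    rw [hD]
    apply Finset.sum_pos'
    · intro i _; positivity
    · refine ⟨i₀, Finset.mem_filter.2 ⟨Finset.mem_univ _, hi₀⟩, ?_⟩
      have he : ehat i₀ = (α i₀ * ψ₁ i₀) / (α i₀) ^ 2 := by rw [hehat]; simp [hi₀]
      have hepos : 0 < ehat i₀ := by
        rw [he]; exact div_pos hi₀ (pow_pos (hpos i₀) 2)
      exact mul_pos (pow_pos (hpos i₀) 2) (pow_pos hepos 2)
  -- total pairing sum
  set g : Fin N → Fin N → ℝ :=
    fun i j => ehat i * (-(α i * H i j * α j) * (f i - f j)) with hg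
  have hsum : ∑ i, ∑ j, g i j = (lam1 - lam0) * D := by
    rw [hDeq, Finset.mul_sum]
    refine Finset.sum_congr rfl fun i _ => ?_
    rw [← Finset.mul_sum, hrow i]
    ring
  -- symmetrization
  have hswap : ∑ i, ∑ j ∈ Finset.univ.filter (fun j => j < i), g i j
      = ∑ i, ∑ j ∈ Finset.univ.filter (fun j => i < j), g j i := by
    rw [Finset.sum_comm' (s' := fun j => Finset.univ.filter (fun i => j < i))
      (t' := Finset.univ)]
    intro i j
    simp [and_comm]
  have hdiag : ∀ i, g i i = 0 := by
    intro i; simp [hg]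
  have h1 : ∀ i : Fin N, (∑ j, g i j)
      = (∑ j ∈ Finset.univ.filter (fun j => i < j), g i j)
        + (∑ j ∈ Finset.univ.filter (fun j => j < i), g i j) := by
    intro i
    rw [← Finset.sum_filter_add_sum_filter_not Finset.univ (fun j => i < j) (g i)]
    congr 1
    have hset : Finset.univ.filter (fun j => ¬ i < j)
        = insert i (Finset.univ.filter (fun j => j < i)) := by
      ext j
      simp only [Finset.mem_filter, Finset.mem_univ, true_and, Finset.mem_insert,
        not_lt]
      constructor
      · intro h
        rcases lt_or_eq_of_le h with h' | h'
        · exact Or.inr h'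
        · exact Or.inl h' 
      · rintro (rfl | h)
        · exact le_rfl
        · exact h.le
    rw [hset, Finset.sum_insert (by simp), hdiag i, zero_add]
  have hsym2 : ∑ i, ∑ j, g i j
      = ∑ i, ∑ j ∈ Finset.univ.filter (fun j => i < j), (g i j + g j i) := by
    calc ∑ i, ∑ j, g i j
        = (∑ i, ∑ j ∈ Finset.univ.filter (fun j => i < j), g i j)
          + (∑ i, ∑ j ∈ Finset.univ.filter (fun j => j < i), g i j) := by
          rw [← Finset.sum_add_distrib]
          exact Finset.sum_congr rfl fun i _ => h1 i
      _ = (∑ i, ∑ j ∈ Finset.univ.filter (fun j => i < j), g i j)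
          + (∑ i, ∑ j ∈ Finset.univ.filter (fun j => i < j), g j i) := by rw [hswap]
      _ = ∑ i, ∑ j ∈ Finset.univ.filter (fun j => i < j), (g i j + g j i) := by
          rw [← Finset.sum_add_distrib]
          exact Finset.sum_congr rfl fun i _ => (Finset.sum_add_distrib).symm
  -- pairwise inequality
  have hpair : ∀ i j : Fin N, i < j →
      -(α i * H i j * α j) * (ehat i - ehat j) ^ 2 ≤ g i j + g j i := by
    intro i j hij
    have hH : H i j ≤ 0 := hoffdiag i j (ne_of_lt hij)
    have hw : 0 ≤ -(α i * H i j * α j) := by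
      have := mul_nonneg (mul_nonneg (hpos i).le (neg_nonneg.2 hH)) (hpos j).le
      nlinarith
    have hHji : H j i = H i j := hsymm.apply i j
    have hgsum : g i j + g j i
        = -(α i * H i j * α j) * ((ehat i - ehat j) * (f i - f j)) := by
      simp only [hg, hHji]
      ring
    rw [hgsum]
    refine mul_le_mul_of_nonneg_left ?_ hw
    rw [hehat' i, hehat' j]
    exact key_ineq (f i) (f j)
  -- conclude
  have hnum : (∑ i, ∑ j ∈ Finset.univ.filter (fun j => i < j),
      -(α i * H i j * α j) * (ehat i - ehat j) ^ 2) ≤ (lam1 - lam0) * D := by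
    rw [← hsum, hsym2]
    refine Finset.sum_le_sum fun i _ => Finset.sum_le_sum fun j hj => ?_
    exact hpair i j (by simpa using hj)
  rw [div_le_iff₀ hDpos]
  exact hnum
end

section
/- For the hypercube example H = −BΣ_{i=1}^n σ^x_i, choosing the reduced edge set Ẽ to consist only of the 2^{n−1} Cheeger-cut edges (the perfect matching between a subcube Q_{n−1} and its complement) gives constriction c = B and reduced constant Φ̃ = B, so the generalised Cheeger inequality yields λ₁ − λ₀ ≥ B/2, a bound independent of n; by contrast the original lower bound Φ²/(2|λ₀|) = B/(2n) vanishes as n → ∞. -/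
open Matrix Finset

namespace Stmt13Aux

variable {n : ℕ}

/-- Walsh character -/
def chi (s x : Fin n → Bool) : ℝ := ∏ k, (if s k && x k then (-1 : ℝ) else 1)

lemma sum_prod_bool (g : Fin n → Bool → ℝ) :
    ∑ s : Fin n → Bool, ∏ k, g k (s k) = ∏ k, (g k false + g k true) := by
  have := Fintype.prod_sum (fun (k : Fin n) (b : Bool) => g k b)
  rw [← this]
  exact Finset.prod_congr rfl fun k _ => by rw [Fintype.sum_bool]; ring

lemma chi_orth (x y : Fin n → Bool) :
    ∑ s : Fin n → Bool, chi s x * chi s y = if x = y then (2 : ℝ) ^ n else 0 := by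
  have h : ∀ s : Fin n → Bool, chi s x * chi s y
      = ∏ k, ((if s k && x k then (-1 : ℝ) else 1) * (if s k && y k then (-1 : ℝ) else 1)) := by
    intro s; rw [chi, chi, ← Finset.prod_mul_distrib]
  simp only [h]
  rw [sum_prod_bool (fun k b => (if b && x k then (-1 : ℝ) else 1) * (if b && y k then (-1 : ℝ) else 1))]
  by_cases hxy : x = y
  · subst hxy
    simp only [if_pos rfl]
    have : ∀ k : Fin n,
        ((if false && x k then (-1:ℝ) else 1) * (if false && x k then (-1:ℝ) else 1)
          + (if true && x k then (-1:ℝ) else 1) * (if true && x k then (-1:ℝ) else 1)) = 2 := by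
      intro k; cases hk : x k <;> simp [hk] <;> norm_num
    rw [Finset.prod_congr rfl fun k _ => this k, Finset.prod_const]
    simp
  · rw [if_neg hxy]
    obtain ⟨k, hk⟩ : ∃ k, x k ≠ y k := by
      by_contra hcon
      push_neg at hcon
      exact hxy (funext hcon)
    apply Finset.prod_eq_zero (Finset.mem_univ k)
    cases hxk : x k <;> cases hyk : y k <;> simp [hxk, hyk] at hk ⊢ <;> norm_num

lemma chi_flip (s x : Fin n → Bool) (k : Fin n) :
    chi s (Function.update x k (!x k)) = (if s k then (-1 : ℝ) else 1) * chi s x := by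
  unfold chi
  rw [Finset.prod_eq_mul_prod_sdiff_singleton_of_mem (Finset.mem_univ k),
      Finset.prod_eq_mul_prod_sdiff_singleton_of_mem (Finset.mem_univ k)
        (f := fun j => if s j && x j then (-1 : ℝ) else 1)]
  have h1 : ∀ j ∈ Finset.univ \ {k},
      (if s j && (Function.update x k (!x k)) j then (-1 : ℝ) else 1)
        = (if s j && x j then (-1 : ℝ) else 1) := by
    intro j hj
    simp only [Finset.mem_sdiff, Finset.mem_singleton] at hj
    rw [Function.update_of_ne hj.2]
  rw [Finset.prod_congr rfl h1, Function.update_self]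
  cases hsk : s k <;> cases hxk : x k <;> simp [hsk, hxk] <;> ring

end Stmt13Aux

namespace Stmt13Aux

lemma card_one_iff (x y : Fin n → Bool) :
    (Finset.univ.filter fun k => x k ≠ y k).card = 1 ↔
      ∃ k, y = Function.update x k (!x k) := by
  constructor
  · intro h
    obtain ⟨k, hk⟩ := Finset.card_eq_one.mp h
    refine ⟨k, funext fun j => ?_⟩
    by_cases hj : j = k
    · subst hj
      have hmem : j ∈ Finset.univ.filter fun i => x i ≠ y i := by
        rw [hk]; exact Finset.mem_singleton_self j
      simp only [Finset.mem_filter, Finset.mem_univ, true_and] at hmem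
      rw [Function.update_self]
      cases hxj : x j <;> cases hyj : y j <;> simp_all
    · have hmem : j ∉ Finset.univ.filter fun i => x i ≠ y i := by
        rw [hk]; simp [hj]
      simp only [Finset.mem_filter, Finset.mem_univ, true_and, not_not] at hmem
      rw [Function.update_of_ne hj]; exact hmem.symm
  · rintro ⟨k, rfl⟩
    have : (Finset.univ.filter fun j => x j ≠ Function.update x k (!x k) j) = {k} := by
      ext j
      by_cases hj : j = k
      · subst hj; simp
      · simp [hj, Function.update_of_ne hj]
    rw [this, Finset.card_singleton]

lemma flip_involutive (k : Fin n) :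
    Function.Involutive (fun x : Fin n → Bool => Function.update x k (!x k)) := by
  intro x; funext j
  rcases eq_or_ne j k with rfl | hj
  · simp
  · simp [Function.update_of_ne hj]

lemma mulVec_eq (B : ℝ) (H : Matrix (Fin n → Bool) (Fin n → Bool) ℝ)
    (hH : ∀ x y, H x y =
      if (Finset.univ.filter fun k => x k ≠ y k).card = 1 then -B else 0)
    (v : (Fin n → Bool) → ℝ) (x : Fin n → Bool) :
    H.mulVec v x = ∑ k : Fin n, -B * v (Function.update x k (!x k)) := by
  have hinj : Function.Injective (fun k : Fin n => Function.update x k (!x k)) := by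
    intro k k' h
    by_contra hne
    have h1 := congrFun h k
    simp only [Function.update_apply, if_pos rfl, if_neg hne] at h1
    simp at h1
  rw [Matrix.mulVec, dotProduct]
  simp only [hH]
  have hsplit : ∀ y : Fin n → Bool,
      (if (Finset.univ.filter fun k => x k ≠ y k).card = 1 then -B else 0) * v y
        = if (Finset.univ.filter fun k => x k ≠ y k).card = 1 then -B * v y else 0 := by
    intro y; split <;> simp
  simp only [hsplit]
  rw [← Finset.sum_filter]
  have himg : (Finset.univ.filter fun y =>
      (Finset.univ.filter fun k => x k ≠ y k).card = 1)
      = Finset.image (fun k => Function.update x k (!x k)) Finset.univ := by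
    ext y
    simp only [Finset.mem_filter, Finset.mem_univ, true_and, Finset.mem_image,
      card_one_iff]
    exact ⟨fun ⟨k, h⟩ => ⟨k, h.symm⟩, fun ⟨k, h⟩ => ⟨k, h.symm⟩⟩
  rw [himg, Finset.sum_image fun k _ k' _ h => hinj h]

def vhat (v : (Fin n → Bool) → ℝ) (s : Fin n → Bool) : ℝ := ∑ x, chi s x * v x

lemma vhat_eigen (B : ℝ) (H : Matrix (Fin n → Bool) (Fin n → Bool) ℝ)
    (hH : ∀ x y, H x y =
      if (Finset.univ.filter fun k => x k ≠ y k).card = 1 then -B else 0)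
    (μ : ℝ) (v : (Fin n → Bool) → ℝ) (hev : H.mulVec v = μ • v)
    (s : Fin n → Bool) :
    μ * vhat v s
      = -B * ((n : ℝ) - 2 * (Finset.univ.filter fun k => s k = true).card)
          * vhat v s := by
  have lhs : ∑ x, chi s x * (H.mulVec v x) = μ * vhat v s := by
    simp only [hev, Pi.smul_apply, smul_eq_mul, vhat, Finset.mul_sum]
    exact Finset.sum_congr rfl fun x _ => by ring
  rw [← lhs]
  have hrw : ∀ x, chi s x * H.mulVec v x
      = ∑ k, -B * (chi s x * v (Function.update x k (!x k))) := by
    intro x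
    rw [mulVec_eq B H hH, Finset.mul_sum]
    exact Finset.sum_congr rfl fun k _ => by ring
  simp only [hrw]
  rw [Finset.sum_comm]
  have hk : ∀ k : Fin n, ∑ x, -B * (chi s x * v (Function.update x k (!x k)))
      = -B * ((if s k then (-1:ℝ) else 1) * vhat v s) := by
    intro k
    have einv := flip_involutive (n := n) k
    calc ∑ x, -B * (chi s x * v (Function.update x k (!x k)))
        = ∑ x, -B * (chi s (Function.update x k (!x k)) * v x) := by
          rw [← Equiv.sum_comp einv.toPerm
            (fun x => -B * (chi s x * v (Function.update x k (!x k))))]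
          refine Finset.sum_congr rfl fun x _ => ?_
          exact congrArg
            (fun t => -B * (chi s (Function.update x k (!x k)) * v t)) (einv x)
      _ = -B * ((if s k then (-1:ℝ) else 1) * vhat v s) := by
          simp only [chi_flip, vhat, Finset.mul_sum]
          exact Finset.sum_congr rfl fun x _ => by ring
  rw [Finset.sum_congr rfl fun k _ => hk k]
  have hsum : ∑ k : Fin n, (if s k then (-1:ℝ) else 1)
      = (n : ℝ) - 2 * (Finset.univ.filter fun k => s k = true).card := by
    rw [Finset.sum_ite, Finset.sum_const, Finset.sum_const]
    have hcard := Finset.card_filter_add_card_filter_not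
      (s := (Finset.univ : Finset (Fin n))) (p := fun k => s k = true)
    simp only [Finset.card_univ, Fintype.card_fin] at hcard
    have h1 : ((Finset.univ.filter fun k => ¬ s k = true).card : ℝ)
        = (n : ℝ) - (Finset.univ.filter fun k => s k = true).card := by
      have := hcard
      push_cast [← this]
      ring
    simp only [nsmul_eq_mul]
    rw [h1]; ring
  rw [← Finset.mul_sum, ← Finset.sum_mul, hsum]
  ring

lemma exists_vhat_ne (v : (Fin n → Bool) → ℝ) (hv : v ≠ 0) :
    ∃ s, vhat v s ≠ 0 := by
  by_contra hcon
  push_neg at hcon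
  apply hv
  funext x
  have key : (2:ℝ)^n * v x = 0 := by
    calc (2:ℝ)^n * v x
        = ∑ y, (if x = y then (2:ℝ)^n else 0) * v y := by
          simp_rw [ite_mul, zero_mul]
          rw [Finset.sum_ite_eq]
          simp
      _ = ∑ y, (∑ s : Fin n → Bool, chi s x * chi s y) * v y := by
          simp_rw [chi_orth]
      _ = ∑ s : Fin n → Bool, chi s x * vhat v s := by
          simp_rw [Finset.sum_mul, vhat, Finset.mul_sum]
          rw [Finset.sum_comm]
          exact Finset.sum_congr rfl fun s _ =>
            Finset.sum_congr rfl fun y _ => by ring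
      _ = 0 := by simp [hcon]
  have h2 : (2:ℝ)^n ≠ 0 := by positivity
  simpa [h2] using key

lemma eigen_form (B : ℝ) (H : Matrix (Fin n → Bool) (Fin n → Bool) ℝ)
    (hH : ∀ x y, H x y =
      if (Finset.univ.filter fun k => x k ≠ y k).card = 1 then -B else 0)
    (μ : ℝ) (hex : ∃ v : (Fin n → Bool) → ℝ, v ≠ 0 ∧ H.mulVec v = μ • v) :
    ∃ c : ℕ, μ = -B * ((n : ℝ) - 2 * c) := by
  obtain ⟨v, hv, hev⟩ := hex
  obtain ⟨s, hs⟩ := exists_vhat_ne v hv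
  have h := vhat_eigen B H hH μ v hev s
  exact ⟨_, mul_right_cancel₀ hs h⟩

lemma const_eigen (B : ℝ) (H : Matrix (Fin n → Bool) (Fin n → Bool) ℝ)
    (hH : ∀ x y, H x y =
      if (Finset.univ.filter fun k => x k ≠ y k).card = 1 then -B else 0) :
    H.mulVec (fun _ => (1:ℝ)) = (-(B * n)) • (fun _ => (1:ℝ)) := by
  funext x
  rw [mulVec_eq B H hH]
  simp [Finset.sum_const]
  ring

end Stmt13Aux

/-- For the hypercube example H = −BΣσ^x, taking the reduced edge set Ẽ to be the
perfect matching of Cheeger-cut edges (flipping coordinate 0) gives constriction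
c = B and reduced constant Φ̃ = B, so the generalised Cheeger bound yields
λ₁ − λ₀ ≥ B/2, independent of n; by contrast the original lower bound
Φ²/(2|λ₀|) = B/(2n) vanishes as n → ∞. -/
theorem stmt_13 {n : ℕ} (hn : 0 < n) (B : ℝ) (hB : 0 < B)
    (H : Matrix (Fin n → Bool) (Fin n → Bool) ℝ)
    (hH : ∀ x y, H x y =
      if (Finset.univ.filter fun k => x k ≠ y k).card = 1 then -B else 0)
    (lam0 lam1 : ℝ) (hlt : lam0 < lam1)
    (hval0 : ∃ v : (Fin n → Bool) → ℝ, v ≠ 0 ∧ H.mulVec v = lam0 • v)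
    (hmin : ∀ (μ : ℝ) (v : (Fin n → Bool) → ℝ), v ≠ 0 → H.mulVec v = μ • v →
      lam0 ≤ μ)
    (hval1 : ∃ v : (Fin n → Bool) → ℝ, v ≠ 0 ∧ H.mulVec v = lam1 • v)
    (hsecond : ∀ (μ : ℝ) (v : (Fin n → Bool) → ℝ), v ≠ 0 → H.mulVec v = μ • v →
      μ = lam0 ∨ lam1 ≤ μ)
    (Et : Finset ((Fin n → Bool) × (Fin n → Bool)))
    (hEt : ∀ p : (Fin n → Bool) × (Fin n → Bool), p ∈ Et ↔
      p.2 = Function.update p.1 ⟨0, hn⟩ (!(p.1 ⟨0, hn⟩)))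
    (Vplus : Finset (Fin n → Bool))
    (hVplus : Vplus = Finset.univ.filter fun x => x ⟨0, hn⟩ = false) :
    (∀ x : Fin n → Bool,
      (∑ y ∈ Finset.univ.filter (fun y => (x, y) ∈ Et), (B / 2 ^ n : ℝ)) /
        ((1 : ℝ) / 2 ^ n) = B) ∧
    (∀ S ⊆ Vplus,
      ∑ x ∈ S, ∑ y ∈ Finset.univ.filter (fun y => (x, y) ∈ Et), (B / 2 ^ n : ℝ) =
        B * ∑ _x ∈ S, ((1 : ℝ) / 2 ^ n)) ∧
    B / 2 ≤ lam1 - lam0 ∧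
    B ^ 2 / (2 * |lam0|) = B / (2 * n) := by
  classical
  have hconst_ne : (fun _ : Fin n → Bool => (1:ℝ)) ≠ 0 := by
    intro h
    have := congrFun h (fun _ => false)
    simp at this
  have hle : lam0 ≤ -(B * n) :=
    hmin _ _ hconst_ne (Stmt13Aux.const_eigen B H hH)
  obtain ⟨c0, hc0⟩ := Stmt13Aux.eigen_form B H hH lam0 hval0
  have hc0nn : (0:ℝ) ≤ (c0:ℝ) := Nat.cast_nonneg _
  have hlam0 : lam0 = -(B * n) := by nlinarith
  obtain ⟨c1, hc1⟩ := Stmt13Aux.eigen_form B H hH lam1 hval1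
  have hgt : -B * ((n:ℝ) - 2*c1) > -(B*n) := by rw [← hc1, ← hlam0]; exact hlt
  have hc1pos : (0:ℝ) < (c1:ℝ) := by nlinarith
  have hc1one : (1:ℝ) ≤ (c1:ℝ) := by
    have h0 : 0 < c1 := by exact_mod_cast hc1pos
    exact_mod_cast h0
  have hfil : ∀ x : Fin n → Bool, (Finset.univ.filter fun y => (x, y) ∈ Et)
      = {Function.update x ⟨0, hn⟩ (!(x ⟨0, hn⟩))} := by
    intro x; ext y; simp [hEt]
  have h2 : (2:ℝ)^n ≠ 0 := by positivity
  refine ⟨?_, ?_, ?_, ?_⟩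
  · intro x
    rw [hfil x, Finset.sum_singleton]
    field_simp
  · intro S _
    have hstep : ∑ x ∈ S, ∑ y ∈ Finset.univ.filter (fun y => (x, y) ∈ Et),
        (B / 2 ^ n : ℝ) = ∑ x ∈ S, (B / 2 ^ n : ℝ) :=
      Finset.sum_congr rfl fun x _ => by rw [hfil x, Finset.sum_singleton]
    rw [hstep, Finset.sum_const, Finset.sum_const]
    simp only [nsmul_eq_mul]
    ring
  · nlinarith
  · rw [hlam0]
    have habs : |-(B * n)| = B * n := by
      rw [abs_neg]
      exact abs_of_nonneg (by positivity)
    rw [habs]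
    have hnne : (n:ℝ) ≠ 0 := Nat.cast_ne_zero.mpr hn.ne'
    rw [div_eq_div_iff (by positivity) (by positivity)]
    ring
end
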